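/- arXiv:2110.13970 — 4 statements merged into one kernel-verified Lean document; each statement's English description precedes it below -/
import Mathlib

section
/- Let $N \ge 2$, let $d_1,\dots,d_N, R, k$ be positive integers, and let $\mathcal{X} \in \mathbb{R}^{d_1 \times \cdots \times d_N}$ be a fixed tensor. Let $\mathcal{G}^1 \in \mathbb{R}^{d_1 \times R}$, $\mathcal{G}^n \in \mathbb{R}^{R \times d_n \times R}$ for $1 < n < N$, and $\mathcal{G}^N \in \mathbb{R}^{R \times d_N \times k}$ be random core tensors whose entries are all i.i.d. standard Gaussian $\mathcal{N}(0,1)$. For each $\kappa \in [k]$ define $\mathbf{y}_\kappa = \sum_{i_1,\dots,i_N} (\mathcal{G}^1)_{i_1,:} (\mathcal{G}^2)_{:,i_2,:} \cdots (\mathcal{G}^{N-1})_{:,i_{N-1},:} (\mathcal{G}^N)_{:,i_N,\kappa} \, \mathcal{X}_{i_1,\dots,i_N}$ and let $f(\mathcal{X}) = \frac{1}{\sqrt{R^{N-1}k}} (\mathbf{y}_1, \dots, \mathbf{y}_k) \in \mathbb{R}^k$. Then $\mathbb{E}\,\|f(\mathcal{X})\|_2^2 = \|\mathcal{X}\|_F^2$.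 -/
open MeasureTheory ProbabilityTheory Matrix Finset

noncomputable section

/-- Path-sum contraction of tensor-train/MPO cores `G` at multi-index `i`, with the
two boundary bond indices fixed to `a` and `b`. -/
def ttPath {N : ℕ} (d : Fin N → ℕ) (ρ : Fin (N + 1) → ℕ)
    (G : (n : Fin N) → Fin (ρ n.castSucc) → Fin (d n) → Fin (ρ n.succ) → ℝ)
    (i : (n : Fin N) → Fin (d n)) (a : Fin (ρ 0)) (b : Fin (ρ (Fin.last N))) : ℝ :=
  ∑ r : ((n : Fin (N + 1)) → Fin (ρ n)),
    if r 0 = a ∧ r (Fin.last N) = b then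
      ∏ n : Fin N, G n (r n.castSucc) (i n) (r n.succ)
    else 0

/-!
Write `y_κ = ∑_{i, r} [r_N = κ] X_i W_{i,r}`, where `r` runs over the bond indices and
`W_{i,r} = ∏_n G^n_{r_{n-1}, i_n, r_n}` is the product along the path `(i, r)`. Each `W_{i,r}`
is a product of distinct independent standard Gaussians, one entry of each core, so
`𝔼[W_{i,r} W_{i',r'}]` is `1` when both paths use the same entries and `0` otherwise (an entry
used only once contributes its zero mean). A path is determined by its entries, so the
`W_{i,r}` are orthonormal in `L²` and `𝔼 ∑_κ y_κ² = ∑_{i,r} X_i² = R^{N-1} k ‖X‖²`.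
-/

theorem Finset.prod_mul_prod_eq_prod_ite {ι M : Type*} [Fintype ι] [DecidableEq ι]
    [CommMonoid M] (A B : Finset ι) (f : ι → M) :
    (∏ i ∈ A, f i) * ∏ i ∈ B, f i
      = ∏ i, (if i ∈ A then f i else 1) * (if i ∈ B then f i else 1) := by
  rw [prod_mul_distrib, prod_ite_mem, prod_ite_mem, univ_inter, univ_inter]

theorem Finset.sum_sum_ite_sq {K T R : Type*} [Fintype K] [Fintype T] [DecidableEq K]
    [Semiring R] (L : T → K) (f : T → R) :
    ∑ κ, ∑ q, (if L q = κ then f q else 0) ^ 2 = ∑ q, f q ^ 2 := by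
  rw [sum_comm]
  simp [ite_pow]

theorem Finset.sq_sum_mul_eq_sum_sum {ι R : Type*} [Fintype ι] [CommSemiring R] (a w : ι → R) :
    (∑ q, a q * w q) ^ 2 = ∑ q, ∑ q', a q * a q' * (w q * w q') := by
  rw [sq, sum_mul_sum]
  exact sum_congr rfl fun q _ => sum_congr rfl fun q' _ => by ring

namespace MeasureTheory

variable {Ω ι : Type*} [MeasurableSpace Ω] {μ : Measure Ω} [Fintype ι] {W : ι → Ω → ℝ}

theorem integrable_sq_sum_mul (hint : ∀ q q', Integrable (fun ω => W q ω * W q' ω) μ)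
    (a : ι → ℝ) : Integrable (fun ω => (∑ q, a q * W q ω) ^ 2) μ := by
  simp only [sq_sum_mul_eq_sum_sum]
  exact integrable_finsetSum _ fun q _ => integrable_finsetSum _ fun q' _ =>
    (hint q q').const_mul _

theorem integral_sq_sum_mul_of_orthonormal [DecidableEq ι]
    (hint : ∀ q q', Integrable (fun ω => W q ω * W q' ω) μ)
    (horth : ∀ q q', ∫ ω, W q ω * W q' ω ∂μ = if q = q' then 1 else 0) (a : ι → ℝ) :
    ∫ ω, (∑ q, a q * W q ω) ^ 2 ∂μ = ∑ q, a q ^ 2 := by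
  simp only [sq_sum_mul_eq_sum_sum]
  rw [integral_finsetSum _ fun q _ => integrable_finsetSum _ fun q' _ =>
    (hint q q').const_mul _]
  refine sum_congr rfl fun q _ => ?_
  rw [integral_finsetSum _ fun q' _ => (hint q q').const_mul _]
  simp [integral_const_mul, horth, sq]

end MeasureTheory

namespace ProbabilityTheory

theorem integral_sq_gaussianReal_zero (v : NNReal) : ∫ x, x ^ 2 ∂gaussianReal 0 v = v := by
  have h := variance_eq_integral (X := id) (μ := gaussianReal 0 v) measurable_id.aemeasurable
  simpa using h.symm

variable {Ω ι : Type*} [MeasurableSpace Ω] {μ : Measure Ω}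

section StandardGaussian

variable {Y : Ω → ℝ}

theorem memLp_two_of_map_eq_gaussianReal (hmeas : Measurable Y)
    (hlaw : μ.map Y = gaussianReal 0 1) : MemLp Y 2 μ :=
  (memLp_map_measure_iff aestronglyMeasurable_id hmeas.aemeasurable).1
    (hlaw ▸ memLp_id_gaussianReal 2)

theorem integral_eq_zero_of_map_eq_gaussianReal (hmeas : Measurable Y)
    (hlaw : μ.map Y = gaussianReal 0 1) : ∫ ω, Y ω ∂μ = 0 := by
  rw [← integral_map (f := fun x => x) hmeas.aemeasurable aestronglyMeasurable_id, hlaw,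
    integral_id_gaussianReal]

theorem integral_sq_eq_one_of_map_eq_gaussianReal (hmeas : Measurable Y)
    (hlaw : μ.map Y = gaussianReal 0 1) : ∫ ω, Y ω ^ 2 ∂μ = 1 := by
  rw [← integral_map (f := fun x => x ^ 2) hmeas.aemeasurable (by fun_prop), hlaw,
    integral_sq_gaussianReal_zero, NNReal.coe_one]

end StandardGaussian

theorem iIndepFun.integrable_fun_finsetProd {Y : ι → Ω → ℝ} (hY : iIndepFun Y μ)
    (hmeas : ∀ i, Measurable (Y i)) (hint : ∀ i, Integrable (Y i) μ) (s : Finset ι) :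
    Integrable (fun ω => ∏ i ∈ s, Y i ω) μ := by
  refine ⟨s.aestronglyMeasurable_fun_prod fun i _ => (hmeas i).aestronglyMeasurable, ?_⟩
  have hY' : iIndepFun (fun i ω => ‖Y i ω‖ₑ) μ := hY.comp _ fun _ => measurable_enorm
  simp only [HasFiniteIntegral, enorm_eq_nnnorm, nnnorm_prod, ENNReal.ofNNReal_finsetProd]
  simp only [← enorm_eq_nnnorm]
  rw [lintegral_prod_eq_prod_lintegral_of_indepFun s _ hY' fun i => (hmeas i).enorm]
  exact ENNReal.prod_lt_top fun i _ => (hint i).2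

section ProductMoments

variable [Fintype ι] [DecidableEq ι] {Y : ι → Ω → ℝ}

theorem iIndepFun.integrable_finsetProd_mul_finsetProd (hY : iIndepFun Y μ)
    (hmeas : ∀ i, Measurable (Y i)) (hL2 : ∀ i, MemLp (Y i) 2 μ) (A B : Finset ι) :
    Integrable (fun ω => (∏ i ∈ A, Y i ω) * ∏ i ∈ B, Y i ω) μ := by
  have := hY.isProbabilityMeasure
  simp only [prod_mul_prod_eq_prod_ite]
  let g (i : ι) (x : ℝ) : ℝ := (if i ∈ A then x else 1) * (if i ∈ B then x else 1)
  have hg : ∀ i, Measurable (g i) := fun i => by dsimp only [g]; split_ifs <;> fun_prop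
  have hfactor : ∀ (i : ι) (s : Finset ι),
      MemLp (fun ω => if i ∈ s then Y i ω else 1) 2 μ :=
    fun i s => by split_ifs; exacts [hL2 i, memLp_const 1]
  exact (hY.comp g hg).integrable_fun_finsetProd (fun i => (hg i).comp (hmeas i))
    (fun i => (hfactor i A).integrable_mul (hfactor i B)) univ

theorem iIndepFun.integral_finsetProd_mul_finsetProd (hY : iIndepFun Y μ)
    (hmeas : ∀ i, Measurable (Y i)) (hmean : ∀ i, ∫ ω, Y i ω ∂μ = 0)
    (hsq : ∀ i, ∫ ω, Y i ω ^ 2 ∂μ = 1) (A B : Finset ι) :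
    ∫ ω, (∏ i ∈ A, Y i ω) * ∏ i ∈ B, Y i ω ∂μ = if A = B then 1 else 0 := by
  simp only [prod_mul_prod_eq_prod_ite]
  rw [hY.integral_fun_prod_comp
    (f := fun i x => (if i ∈ A then x else 1) * (if i ∈ B then x else 1))
    (fun i => (hmeas i).aemeasurable) (fun i => by split_ifs <;> fun_prop)]
  have hfactor : ∀ i,
      ∫ ω, (if i ∈ A then Y i ω else 1) * (if i ∈ B then Y i ω else 1) ∂μ
        = if (i ∈ A ↔ i ∈ B) then 1 else 0 := fun i => by
    have := hY.isProbabilityMeasure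
    by_cases hA : i ∈ A <;> by_cases hB : i ∈ B <;> simp [hA, hB, hmean, ← sq, hsq]
  simp only [hfactor, Fintype.prod_boole, Finset.ext_iff]

end ProductMoments

end ProbabilityTheory

section TensorTrain

variable {N : ℕ} {d : Fin N → ℕ} {ρ : Fin (N + 1) → ℕ}

abbrev CoreEntry (d : Fin N → ℕ) (ρ : Fin (N + 1) → ℕ) :=
  Σ n : Fin N, Fin (ρ n.castSucc) × Fin (d n) × Fin (ρ n.succ)

def pathProd (G : (n : Fin N) → Fin (ρ n.castSucc) → Fin (d n) → Fin (ρ n.succ) → ℝ)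
    (i : (n : Fin N) → Fin (d n)) (r : (t : Fin (N + 1)) → Fin (ρ t)) : ℝ :=
  ∏ n, G n (r n.castSucc) (i n) (r n.succ)

def coreEntries (i : (n : Fin N) → Fin (d n)) (r : (t : Fin (N + 1)) → Fin (ρ t)) :
    Finset (CoreEntry d ρ) :=
  univ.image fun n => ⟨n, r n.castSucc, i n, r n.succ⟩

theorem pathProd_eq_prod_coreEntries
    (G : (n : Fin N) → Fin (ρ n.castSucc) → Fin (d n) → Fin (ρ n.succ) → ℝ)
    (i : (n : Fin N) → Fin (d n)) (r : (t : Fin (N + 1)) → Fin (ρ t)) :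
    pathProd G i r = ∏ p ∈ coreEntries i r, G p.1 p.2.1 p.2.2.1 p.2.2.2 := by
  classical
  rw [coreEntries, prod_image fun n _ n' _ h => congrArg Sigma.fst h]
  rfl

theorem coreEntries_inj (hN : 0 < N) {i i' : (n : Fin N) → Fin (d n)}
    {r r' : (t : Fin (N + 1)) → Fin (ρ t)} :
    coreEntries i r = coreEntries i' r' ↔ i = i' ∧ r = r' := by
  refine ⟨fun h => ?_, fun h => h.1 ▸ h.2 ▸ rfl⟩
  have hentry : ∀ n : Fin N,
      r n.castSucc = r' n.castSucc ∧ i n = i' n ∧ r n.succ = r' n.succ := by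
    intro n
    have hn : (⟨n, r n.castSucc, i n, r n.succ⟩ : CoreEntry d ρ) ∈ coreEntries i' r' :=
      h ▸ mem_image_of_mem _ (mem_univ n)
    obtain ⟨n', -, hn'⟩ := mem_image.1 hn
    obtain ⟨rfl, heq⟩ := Sigma.mk.inj_iff.1 hn'
    simpa [eq_comm] using heq
  refine ⟨funext fun n => (hentry n).2.1, funext fun t => ?_⟩
  cases t using Fin.cases with
  | zero => exact (hentry ⟨0, hN⟩).1
  | succ t => exact (hentry t).2.2

theorem sum_ttPath_left
    (G : (n : Fin N) → Fin (ρ n.castSucc) → Fin (d n) → Fin (ρ n.succ) → ℝ)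
    (i : (n : Fin N) → Fin (d n)) (b : Fin (ρ (Fin.last N))) :
    ∑ a, ttPath d ρ G i a b = ∑ r, if r (Fin.last N) = b then pathProd G i r else 0 := by
  simp only [ttPath]
  rw [sum_comm]
  refine sum_congr rfl fun r _ => ?_
  simp [ite_and, pathProd]

theorem sum_mul_sum_ttPath_eq
    (G : (n : Fin N) → Fin (ρ n.castSucc) → Fin (d n) → Fin (ρ n.succ) → ℝ)
    (X : ((n : Fin N) → Fin (d n)) → ℝ) (κ : Fin (ρ (Fin.last N))) :
    ∑ i, X i * ∑ a, ttPath d ρ G i a κ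
      = ∑ q : ((n : Fin N) → Fin (d n)) × ((t : Fin (N + 1)) → Fin (ρ t)),
          (if q.2 (Fin.last N) = κ then X q.1 else 0) * pathProd G q.1 q.2 := by
  simp only [sum_ttPath_left, Fintype.sum_prod_type, mul_sum, ite_mul, zero_mul, mul_ite,
    mul_zero]

theorem card_bondIndices {R k : ℕ} (hN : 0 < N) (hρ0 : ρ 0 = 1) (hρlast : ρ (Fin.last N) = k)
    (hρmid : ∀ n : Fin (N + 1), n ≠ 0 → n ≠ Fin.last N → ρ n = R) :
    Fintype.card ((t : Fin (N + 1)) → Fin (ρ t)) = R ^ (N - 1) * k := by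
  obtain ⟨M, rfl⟩ : ∃ M, N = M + 1 := ⟨N - 1, by omega⟩
  rw [Fintype.card_pi]
  simp only [Fintype.card_fin]
  rw [Fin.prod_univ_succ, Fin.prod_univ_castSucc, Fin.succ_last, hρ0, hρlast, one_mul,
    Nat.add_sub_cancel]
  congr
  rw [prod_congr rfl fun j _ => hρmid _ (Fin.succ_ne_zero _) ?_]
  · simp
  · exact Fin.succ_castSucc j ▸ (Fin.castSucc_lt_last _).ne

end TensorTrain

section GaussianCores

variable {Ω : Type*} [MeasurableSpace Ω] {μ : Measure Ω} {N : ℕ} {d : Fin N → ℕ}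
  {ρ : Fin (N + 1) → ℕ}
  {G : Ω → (n : Fin N) → Fin (ρ n.castSucc) → Fin (d n) → Fin (ρ n.succ) → ℝ}

theorem integrable_pathProd_mul_pathProd
    (hGmeas : ∀ n a i b, Measurable (fun ω => G ω n a i b))
    (hGdist : ∀ n a i b, Measure.map (fun ω => G ω n a i b) μ = gaussianReal 0 1)
    (hGindep : iIndepFun (fun (p : CoreEntry d ρ) ω => G ω p.1 p.2.1 p.2.2.1 p.2.2.2) μ)
    (i i' : (n : Fin N) → Fin (d n)) (r r' : (t : Fin (N + 1)) → Fin (ρ t)) :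
    Integrable (fun ω => pathProd (G ω) i r * pathProd (G ω) i' r') μ := by
  classical
  simp only [pathProd_eq_prod_coreEntries]
  exact hGindep.integrable_finsetProd_mul_finsetProd (fun _ => hGmeas _ _ _ _)
    (fun _ => memLp_two_of_map_eq_gaussianReal (hGmeas _ _ _ _) (hGdist _ _ _ _)) _ _

theorem integral_pathProd_mul_pathProd (hN : 0 < N)
    (hGmeas : ∀ n a i b, Measurable (fun ω => G ω n a i b))
    (hGdist : ∀ n a i b, Measure.map (fun ω => G ω n a i b) μ = gaussianReal 0 1)
    (hGindep : iIndepFun (fun (p : CoreEntry d ρ) ω => G ω p.1 p.2.1 p.2.2.1 p.2.2.2) μ)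
    (i i' : (n : Fin N) → Fin (d n)) (r r' : (t : Fin (N + 1)) → Fin (ρ t)) :
    ∫ ω, pathProd (G ω) i r * pathProd (G ω) i' r' ∂μ
      = if i = i' ∧ r = r' then 1 else 0 := by
  classical
  simp only [pathProd_eq_prod_coreEntries]
  rw [hGindep.integral_finsetProd_mul_finsetProd (fun _ => hGmeas _ _ _ _)
    (fun _ => integral_eq_zero_of_map_eq_gaussianReal (hGmeas _ _ _ _) (hGdist _ _ _ _))
    (fun _ => integral_sq_eq_one_of_map_eq_gaussianReal (hGmeas _ _ _ _) (hGdist _ _ _ _))]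
  exact if_congr (coreEntries_inj hN) rfl rfl

end GaussianCores

theorem mpo_rp_expected_isometry_general
    {Ω : Type} [MeasurableSpace Ω] (μ : Measure Ω) [IsProbabilityMeasure μ]
    (N : ℕ) (hN : 2 ≤ N) (d : Fin N → ℕ)
    (R k : ℕ) (hR : 0 < R) (hk : 0 < k)
    (ρ : Fin (N + 1) → ℕ) (hρ0 : ρ 0 = 1) (hρlast : ρ (Fin.last N) = k)
    (hρmid : ∀ n : Fin (N + 1), n ≠ 0 → n ≠ Fin.last N → ρ n = R)
    (X : ((n : Fin N) → Fin (d n)) → ℝ)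
    (G : Ω → (n : Fin N) → Fin (ρ n.castSucc) → Fin (d n) → Fin (ρ n.succ) → ℝ)
    (hGmeas : ∀ n a i b, Measurable (fun ω => G ω n a i b))
    (hGdist : ∀ n a i b, Measure.map (fun ω => G ω n a i b) μ = gaussianReal 0 1)
    (hGindep : iIndepFun
      (fun p : (Σ n : Fin N, Fin (ρ n.castSucc) × Fin (d n) × Fin (ρ n.succ)) =>
        fun ω => G ω p.1 p.2.1 p.2.2.1 p.2.2.2) μ) :
    ∫ ω, ∑ κ : Fin (ρ (Fin.last N)),
        ((1 / Real.sqrt ((R : ℝ) ^ (N - 1) * k)) *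
          (∑ i, X i * ∑ a, ttPath d ρ (G ω) i a κ)) ^ 2 ∂μ
      = ∑ i, (X i) ^ 2 := by
  let W (q : ((n : Fin N) → Fin (d n)) × ((t : Fin (N + 1)) → Fin (ρ t))) (ω : Ω) : ℝ :=
    pathProd (G ω) q.1 q.2
  have hint : ∀ q q', Integrable (fun ω => W q ω * W q' ω) μ := fun q q' =>
    integrable_pathProd_mul_pathProd hGmeas hGdist hGindep _ _ _ _
  have horth : ∀ q q', ∫ ω, W q ω * W q' ω ∂μ = if q = q' then 1 else 0 := fun q q' => by
    simp only [W, integral_pathProd_mul_pathProd (by omega) hGmeas hGdist hGindep, Prod.ext_iff]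
  let a (κ : Fin (ρ (Fin.last N)))
      (q : ((n : Fin N) → Fin (d n)) × ((t : Fin (N + 1)) → Fin (ρ t))) : ℝ :=
    if q.2 (Fin.last N) = κ then X q.1 else 0
  set c := 1 / Real.sqrt ((R : ℝ) ^ (N - 1) * k)
  calc _ = ∑ κ, c ^ 2 * ∫ ω, (∑ q, a κ q * W q ω) ^ 2 ∂μ := by
        simp only [sum_mul_sum_ttPath_eq, mul_pow]
        rw [integral_finsetSum _ fun κ _ => (integrable_sq_sum_mul hint _).const_mul _]
        simp only [integral_const_mul, a, W]
    _ = c ^ 2 * ∑ q : ((n : Fin N) → Fin (d n)) × ((t : Fin (N + 1)) → Fin (ρ t)),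
          X q.1 ^ 2 := by
        simp only [integral_sq_sum_mul_of_orthonormal hint horth, ← mul_sum, a, sum_sum_ite_sq]
    _ = c ^ 2 * ((R ^ (N - 1) * k : ℕ) * ∑ i, X i ^ 2) := by
        rw [Fintype.sum_prod_type_right, ← card_bondIndices (by omega) hρ0 hρlast hρmid]
        simp [mul_sum]
    _ = ∑ i, X i ^ 2 := by
        have hx : (0 : ℝ) < R ^ (N - 1) * k := by positivity
        rw [div_pow, Real.sq_sqrt hx.le]
        push_cast
        field_simp

/-- Expected isometry of the MPO random projection with output shape `k·1·⋯·1`: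
the cores have bond dimensions `1, R, …, R, k`, i.i.d. standard Gaussian entries, and
`𝔼 ‖f(𝒳)‖₂² = ‖𝒳‖_F²`. -/
theorem mpo_rp_expected_isometry
    {Ω : Type} [MeasurableSpace Ω] (μ : Measure Ω) [IsProbabilityMeasure μ]
    (N : ℕ) (hN : 2 ≤ N) (d : Fin N → ℕ) (hd : ∀ n, 0 < d n)
    (R k : ℕ) (hR : 0 < R) (hk : 0 < k)
    (ρ : Fin (N + 1) → ℕ) (hρ0 : ρ 0 = 1) (hρlast : ρ (Fin.last N) = k)
    (hρmid : ∀ n : Fin (N + 1), n ≠ 0 → n ≠ Fin.last N → ρ n = R)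
    (X : ((n : Fin N) → Fin (d n)) → ℝ)
    (G : Ω → (n : Fin N) → Fin (ρ n.castSucc) → Fin (d n) → Fin (ρ n.succ) → ℝ)
    (hGmeas : ∀ n a i b, Measurable (fun ω => G ω n a i b))
    (hGdist : ∀ n a i b, Measure.map (fun ω => G ω n a i b) μ = gaussianReal 0 1)
    (hGindep : iIndepFun
      (fun p : (Σ n : Fin N, Fin (ρ n.castSucc) × Fin (d n) × Fin (ρ n.succ)) =>
        fun ω => G ω p.1 p.2.1 p.2.2.1 p.2.2.2) μ) :
    ∫ ω, ∑ κ : Fin (ρ (Fin.last N)),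
        ((1 / Real.sqrt ((R : ℝ) ^ (N - 1) * k)) *
          (∑ i, X i * ∑ a, ttPath d ρ (G ω) i a κ)) ^ 2 ∂μ
      = ∑ i, (X i) ^ 2 :=
  mpo_rp_expected_isometry_general μ N hN d R k hR hk ρ hρ0 hρlast hρmid X G hGmeas hGdist hGindep
end
end

section
/- Let $\mathbf{A} \in \mathbb{R}^{d \times R}$ be a random matrix whose entries are i.i.d. Rademacher random variables, and let $\mathbf{B} \in \mathbb{R}^{p \times d}$ be a random matrix independent of $\mathbf{A}$ with $\mathbb{E}\|\mathbf{B}\|_F^4 < \infty$. Then, writing $\mathbf{M} = \mathbf{B}^\mathsf{T}\mathbf{B}$, $\mathbb{E}\,\|\mathbf{B}\mathbf{A}\|_F^4 = R^2\, \mathbb{E}\big[\mathrm{tr}(\mathbf{M})^2\big] + 2R\, \mathbb{E}\big[\mathrm{tr}(\mathbf{M}^2)\big] - 2R\, \mathbb{E}\Big[\sum_{i=1}^{d} \mathbf{M}_{ii}^2\Big]$. -/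
/-!
Write `M = BᵀB` and let `a_r` be the columns of `A`, so that `‖BA‖_F² = ∑_r a_rᵀ M a_r`.
Squaring gives a sum of terms `A_ir A_jr A_ks A_ls · M_ij M_kl`, and independence of `A` and `B`
splits each expectation into a fourth mixed moment of the Rademacher entries times
`𝔼[M_ij M_kl]`. A product of independent Rademacher variables has expectation `1` if every
variable occurs an even number of times and `0` otherwise, so the fourth moment is `1` exactly
when the four entries match up in pairs. The pairing within each column gives `R² 𝔼[tr(M)²]`;
the two pairings across columns force `r = s` and give `R 𝔼[∑ M_ij²] + R 𝔼[tr(M²)]`, which are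
equal by symmetry of `M`; and `2R 𝔼[∑ M_ii²]` corrects for the diagonal, counted by all three.
-/

open MeasureTheory ProbabilityTheory Matrix Finset

noncomputable section

/-- The Rademacher distribution on `ℝ`: uniform on `{1, -1}`. -/
def radDist : Measure ℝ :=
  (2⁻¹ : ENNReal) • Measure.dirac (1 : ℝ) + (2⁻¹ : ENNReal) • Measure.dirac (-1 : ℝ)

instance isProbabilityMeasure_radDist : IsProbabilityMeasure radDist :=
  ⟨by simp [radDist, ENNReal.inv_two_add_inv_two]⟩

theorem integral_pow_radDist (n : ℕ) : ∫ x, x ^ n ∂radDist = if Even n then 1 else 0 := by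
  rw [radDist, integral_add_measure, integral_smul_measure, integral_smul_measure,
    integral_dirac, integral_dirac]
  · rcases n.even_or_odd with h | h
    · norm_num [h, h.neg_one_pow]
    · simp [h.neg_one_pow, Nat.not_even_iff_odd.mpr h]
  all_goals exact (integrable_dirac (by simp)).smul_measure (by simp)

theorem ae_abs_eq_one_radDist : ∀ᵐ x ∂radDist, |x| = 1 := by
  simp [radDist, ae_dirac_eq]

/-- Inclusion–exclusion over the three pairings of `a, b, c, d`; all three hold iff
`a = b = c = d`. -/
def rademacherMoment₄ {ι : Type*} [DecidableEq ι] (a b c d : ι) : ℝ :=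
  (if a = b ∧ c = d then 1 else 0) + (if a = c ∧ b = d then 1 else 0) +
    (if a = d ∧ b = c then 1 else 0) - 2 * if a = b ∧ b = c ∧ c = d then 1 else 0

theorem rademacherMoment₄_eq_ite {ι : Type*} [DecidableEq ι] (a b c d : ι) :
    rademacherMoment₄ a b c d =
      if (a = b ∧ c = d) ∨ (a = c ∧ b = d) ∨ (a = d ∧ b = c) then 1 else 0 := by
  unfold rademacherMoment₄
  by_cases hab : a = b <;> by_cases hac : a = c <;> by_cases had : a = d <;>
    by_cases hbc : b = c <;> by_cases hbd : b = d <;> by_cases hcd : c = d <;>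
    simp_all
  all_goals norm_num

theorem Multiset.even_count_four_iff {ι : Type*} [DecidableEq ι] (a b c d : ι) :
    (∀ i, Even (({a, b, c, d} : Multiset ι).count i)) ↔
      (a = b ∧ c = d) ∨ (a = c ∧ b = d) ∨ (a = d ∧ b = c) := by
  simp only [Multiset.insert_eq_cons, Multiset.count_cons, Multiset.count_singleton]
  constructor
  · intro h
    have ha := h a; have hb := h b; have hc := h c; have hd := h d
    by_cases hab : a = b <;> by_cases hac : a = c <;> by_cases had : a = d <;>
      by_cases hbc : b = c <;> by_cases hbd : b = d <;> by_cases hcd : c = d <;>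
      simp_all [Nat.even_iff]
    all_goals omega
  · rintro (⟨rfl, rfl⟩ | ⟨rfl, rfl⟩ | ⟨rfl, rfl⟩) i <;>
      split_ifs <;> simp [Nat.even_iff]

section RademacherFamily

variable {Ω ι : Type*} [MeasurableSpace Ω] {μ : Measure Ω} {X : ι → Ω → ℝ}

theorem integral_pow_of_map_eq_radDist {Y : Ω → ℝ} (hY : μ.map Y = radDist) (n : ℕ) :
    ∫ ω, Y ω ^ n ∂μ = if Even n then 1 else 0 := by
  have hYm : AEMeasurable Y μ := .of_map_ne_zero (hY ▸ NeZero.ne _)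
  rw [← integral_pow_radDist, ← hY, integral_map hYm (by fun_prop)]

theorem ae_abs_eq_one_of_map_eq_radDist {Y : Ω → ℝ} (hY : μ.map Y = radDist) :
    ∀ᵐ ω ∂μ, |Y ω| = 1 :=
  ae_of_ae_map (.of_map_ne_zero (hY ▸ NeZero.ne _)) (hY ▸ ae_abs_eq_one_radDist)

theorem integrable_mul_mul_mul_of_map_eq_radDist [IsFiniteMeasure μ]
    (hlaw : ∀ i, μ.map (X i) = radDist) (a b c d : ι) :
    Integrable (fun ω => X a ω * X b ω * X c ω * X d ω) μ := by
  have hX i : AEMeasurable (X i) μ := .of_map_ne_zero (hlaw i ▸ NeZero.ne _)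
  refine .of_bound (by fun_prop) 1 ?_
  filter_upwards [ae_abs_eq_one_of_map_eq_radDist (hlaw a),
    ae_abs_eq_one_of_map_eq_radDist (hlaw b), ae_abs_eq_one_of_map_eq_radDist (hlaw c),
    ae_abs_eq_one_of_map_eq_radDist (hlaw d)] with ω ha hb hc hd
  simp [ha, hb, hc, hd]

variable [Fintype ι] [DecidableEq ι]

theorem integral_multiset_prod_of_iIndepFun_radDist (hlaw : ∀ i, μ.map (X i) = radDist)
    (hind : iIndepFun X μ) (s : Multiset ι) :
    ∫ ω, (s.map (X · ω)).prod ∂μ = if ∀ i, Even (s.count i) then 1 else 0 := by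
  calc ∫ ω, (s.map (X · ω)).prod ∂μ = ∫ ω, ∏ i, X i ω ^ s.count i ∂μ := by
        congr with ω
        rw [Finset.prod_multiset_map_count]
        exact prod_subset (subset_univ _) fun i _ hi => by
          rw [Multiset.count_eq_zero.2 (by simpa using hi), pow_zero]
    _ = ∏ i, ∫ ω, X i ω ^ s.count i ∂μ :=
        hind.integral_fun_prod_comp (fun i => .of_map_ne_zero (hlaw i ▸ NeZero.ne _))
          (f := fun i x => x ^ s.count i) fun i => by fun_prop
    _ = _ := by
        simp_rw [integral_pow_of_map_eq_radDist (hlaw _), prod_boole, mem_univ, true_implies]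

theorem integral_mul_mul_mul_of_iIndepFun_radDist (hlaw : ∀ i, μ.map (X i) = radDist)
    (hind : iIndepFun X μ) (a b c d : ι) :
    ∫ ω, X a ω * X b ω * X c ω * X d ω ∂μ = rademacherMoment₄ a b c d := by
  have h := integral_multiset_prod_of_iIndepFun_radDist hlaw hind {a, b, c, d}
  simp only [Multiset.even_count_four_iff] at h
  simp only [Multiset.insert_eq_cons, Multiset.map_cons, Multiset.prod_cons,
    Multiset.map_singleton, Multiset.prod_singleton] at h
  rw [rademacherMoment₄_eq_ite, ← h]
  simp only [mul_assoc]

theorem integral_mul_mul_mul_mul_of_indepFun [IsProbabilityMeasure μ]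
    (hlaw : ∀ i, μ.map (X i) = radDist) (hind : iIndepFun X μ) {Z : Ω → ℝ}
    (hZ : Integrable Z μ) {a b c d : ι}
    (hXZ : IndepFun (fun ω => X a ω * X b ω * X c ω * X d ω) Z μ) :
    ∫ ω, X a ω * X b ω * X c ω * X d ω * Z ω ∂μ =
      rademacherMoment₄ a b c d * ∫ ω, Z ω ∂μ := by
  rw [hXZ.integral_fun_mul_eq_mul_integral
    (integrable_mul_mul_mul_of_map_eq_radDist hlaw a b c d).1 hZ.1,
    integral_mul_mul_mul_of_iIndepFun_radDist hlaw hind]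

end RademacherFamily

theorem Matrix.trace_transpose_mul_self_of_mul {m n r R : Type*} [Fintype m] [Fintype n]
    [Fintype r] [CommSemiring R] (B : Matrix m n R) (A : Matrix n r R) :
    trace ((B * A)ᵀ * (B * A)) = ∑ k, ∑ i, ∑ j, A i k * A j k * (Bᵀ * B) i j := by
  rw [transpose_mul, Matrix.mul_assoc, ← Matrix.mul_assoc Bᵀ]
  simp only [trace, diag, mul_apply, transpose_apply, Finset.mul_sum, Finset.sum_mul]
  congr! 4 with k i j t
  ring

theorem Matrix.abs_transpose_mul_self_apply_le {m n : Type*} [Fintype m] [Fintype n]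
    (B : Matrix m n ℝ) (i j : n) : |(Bᵀ * B) i j| ≤ ∑ k, ∑ l, B k l ^ 2 := by
  rw [mul_apply]
  refine (abs_sum_le_sum_abs _ _).trans (sum_le_sum fun k _ => ?_)
  have hi := single_le_sum (fun l _ => sq_nonneg (B k l)) (mem_univ i)
  have hj := single_le_sum (fun l _ => sq_nonneg (B k l)) (mem_univ j)
  simp only [transpose_apply]
  exact abs_le.2
    ⟨by nlinarith [sq_nonneg (B k i + B k j)], by nlinarith [sq_nonneg (B k i - B k j)]⟩

theorem integral_sq_sum {Ω τ : Type*} [MeasurableSpace Ω] {μ : Measure Ω} [Fintype τ]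
    {f : τ → Ω → ℝ} (hf : ∀ t u, Integrable (fun ω => f t ω * f u ω) μ) :
    ∫ ω, (∑ t, f t ω) ^ 2 ∂μ = ∑ t, ∑ u, ∫ ω, f t ω * f u ω ∂μ := by
  simp_rw [sq, Finset.sum_mul_sum]
  rw [integral_finsetSum _ fun t _ => integrable_finsetSum _ fun u _ => hf t u]
  exact sum_congr rfl fun t _ => integral_finsetSum _ fun u _ => hf t u

theorem integrable_transpose_mul_self_apply_mul {Ω m n : Type*} [MeasurableSpace Ω]
    {μ : Measure Ω} [Fintype m] [Fintype n] {B : Ω → Matrix m n ℝ}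
    (hB : ∀ k l, AEStronglyMeasurable (fun ω => B ω k l) μ)
    (hBint : Integrable (fun ω => (∑ k, ∑ l, B ω k l ^ 2) ^ 2) μ) (i j i' j' : n) :
    Integrable (fun ω => ((B ω)ᵀ * B ω) i j * ((B ω)ᵀ * B ω) i' j') μ := by
  refine hBint.mono' (by simp only [mul_apply, transpose_apply]; fun_prop)
    (.of_forall fun ω => ?_)
  rw [Real.norm_eq_abs, abs_mul, sq]
  exact mul_le_mul (abs_transpose_mul_self_apply_le _ _ _)
    (abs_transpose_mul_self_apply_le _ _ _) (abs_nonneg _)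
    (sum_nonneg fun _ _ => sum_nonneg fun _ _ => sq_nonneg _)

section RandomMatrix

variable {Ω n : Type*} [MeasurableSpace Ω] {μ : Measure Ω} [Fintype n] {M : Ω → Matrix n n ℝ}

theorem integral_sq_trace (hM : ∀ i j k l, Integrable (fun ω => M ω i j * M ω k l) μ) :
    ∫ ω, trace (M ω) ^ 2 ∂μ = ∑ i, ∑ k, ∫ ω, M ω i i * M ω k k ∂μ :=
  integral_sq_sum fun i k => hM i i k k

theorem integral_trace_sq [DecidableEq n]
    (hM : ∀ i j k l, Integrable (fun ω => M ω i j * M ω k l) μ) :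
    ∫ ω, trace (M ω ^ 2) ∂μ = ∑ i, ∑ j, ∫ ω, M ω i j * M ω j i ∂μ := by
  simp only [sq, trace, Matrix.diag, mul_apply]
  rw [integral_finsetSum _ fun i _ => integrable_finsetSum _ fun j _ => hM i j j i]
  exact sum_congr rfl fun i _ => integral_finsetSum _ fun j _ => hM i j j i

theorem integral_sum_sq_diag (hM : ∀ i j k l, Integrable (fun ω => M ω i j * M ω k l) μ) :
    ∫ ω, ∑ i, M ω i i ^ 2 ∂μ = ∑ i, ∫ ω, M ω i i * M ω i i ∂μ := by
  simp only [sq]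
  exact integral_finsetSum _ fun i _ => hM i i i i

end RandomMatrix

theorem sum_rademacherMoment₄_mul {ι κ : Type*} [Fintype ι] [DecidableEq ι] [Fintype κ]
    [DecidableEq κ] (m : ι → ι → ι → ι → ℝ) (hm : ∀ i j, m i j i j = m i j j i) :
    ∑ r : κ, ∑ i, ∑ j, ∑ s : κ, ∑ k, ∑ l,
        rademacherMoment₄ (i, r) (j, r) (k, s) (l, s) * m i j k l
      = Fintype.card κ ^ 2 * ∑ i, ∑ k, m i i k k + 2 * Fintype.card κ * ∑ i, ∑ j, m i j j i
        - 2 * Fintype.card κ * ∑ i, m i i i i := by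
  simp only [rademacherMoment₄, Prod.mk.injEq, add_mul, sub_mul, sum_add_distrib,
    sum_sub_distrib]
  simp only [and_true, ite_and, ite_mul, one_mul, zero_mul, sum_ite_irrel, sum_ite_eq, mem_univ,
    reduceIte, sum_const_zero, sum_const, card_univ, nsmul_eq_mul, mul_ite, mul_one, mul_zero]
  simp only [← mul_sum]
  rw [sum_congr rfl fun i _ => sum_congr rfl fun j _ => hm i j]
  ring

theorem integral_sq_sum_quadForm_rademacher {Ω ι κ : Type*} [MeasurableSpace Ω]
    {μ : Measure Ω} [IsProbabilityMeasure μ] [Fintype ι] [DecidableEq ι] [Fintype κ]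
    [DecidableEq κ] {X : ι × κ → Ω → ℝ} {M : Ω → Matrix ι ι ℝ}
    (hlaw : ∀ q, μ.map (X q) = radDist) (hind : iIndepFun X μ)
    (hXM : IndepFun (fun ω q => X q ω) (fun ω i j => M ω i j) μ)
    (hM : ∀ i j k l, Integrable (fun ω => M ω i j * M ω k l) μ) (hsymm : ∀ ω, (M ω).IsSymm) :
    ∫ ω, (∑ r, ∑ i, ∑ j, X (i, r) ω * X (j, r) ω * M ω i j) ^ 2 ∂μ
      = Fintype.card κ ^ 2 * ∫ ω, trace (M ω) ^ 2 ∂μ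
        + 2 * Fintype.card κ * ∫ ω, trace (M ω ^ 2) ∂μ
        - 2 * Fintype.card κ * ∫ ω, ∑ i, M ω i i ^ 2 ∂μ := by
  set f : κ × ι × ι → Ω → ℝ := fun t ω =>
    X (t.2.1, t.1) ω * X (t.2.2, t.1) ω * M ω t.2.1 t.2.2
  have hterm (t u : κ × ι × ι) :
      Integrable (fun ω => f t ω * f u ω) μ ∧ ∫ ω, f t ω * f u ω ∂μ =
        rademacherMoment₄ (t.2.1, t.1) (t.2.2, t.1) (u.2.1, u.1) (u.2.2, u.1) *
          ∫ ω, M ω t.2.1 t.2.2 * M ω u.2.1 u.2.2 ∂μ := by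
    obtain ⟨r, i, j⟩ := t
    obtain ⟨s, k, l⟩ := u
    have hfac : (fun ω => f (r, i, j) ω * f (s, k, l) ω) = fun ω =>
        X (i, r) ω * X (j, r) ω * X (k, s) ω * X (l, s) ω * (M ω i j * M ω k l) := by
      ext ω; simp only [f]; ring
    have hindep : IndepFun (fun ω => X (i, r) ω * X (j, r) ω * X (k, s) ω * X (l, s) ω)
        (fun ω => M ω i j * M ω k l) μ :=
      hXM.comp (φ := fun (x : ι × κ → ℝ) => x (i, r) * x (j, r) * x (k, s) * x (l, s))
        (ψ := fun (m : ι → ι → ℝ) => m i j * m k l) (by fun_prop) (by fun_prop)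
    rw [hfac]
    exact ⟨hindep.integrable_mul (integrable_mul_mul_mul_of_map_eq_radDist hlaw ..)
      (hM i j k l), integral_mul_mul_mul_mul_of_indepFun hlaw hind (hM i j k l) hindep⟩
  have hm (i j : ι) : ∫ ω, M ω i j * M ω i j ∂μ = ∫ ω, M ω i j * M ω j i ∂μ := by
    simp only [(hsymm _).apply i j]
  calc _ = ∫ ω, (∑ t, f t ω) ^ 2 ∂μ := by simp only [Fintype.sum_prod_type, f]
    _ = ∑ t, ∑ u, ∫ ω, f t ω * f u ω ∂μ := integral_sq_sum fun t u => (hterm t u).1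
    _ = _ := by
        simp only [fun t u => (hterm t u).2, Fintype.sum_prod_type]
        rw [sum_rademacherMoment₄_mul _ hm, integral_sq_trace hM, integral_trace_sq hM,
          integral_sum_sq_diag hM]

theorem rademacher_matrix_prod_fourth_moment_eq_general
    {Ω : Type} [MeasurableSpace Ω] (μ : Measure Ω) [IsProbabilityMeasure μ]
    (d R p : ℕ)
    (A : Ω → Fin d → Fin R → ℝ) (B : Ω → Fin p → Fin d → ℝ)
    (hAdist : ∀ i j, Measure.map (fun ω => A ω i j) μ = radDist)
    (hAiid : iIndepFun
      (fun q : Fin d × Fin R => fun ω => A ω q.1 q.2) μ)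
    (hBmeas : Measurable B)
    (hAB : IndepFun A B μ)
    (hBint : Integrable (fun ω => (∑ i, ∑ j, (B ω i j) ^ 2) ^ 2) μ)
    (M : Ω → Matrix (Fin d) (Fin d) ℝ)
    (hM : ∀ ω, M ω = (Matrix.of (B ω))ᵀ * Matrix.of (B ω)) :
    ∫ ω, (Matrix.trace ((Matrix.of (B ω) * Matrix.of (A ω))ᵀ
            * (Matrix.of (B ω) * Matrix.of (A ω)))) ^ 2 ∂μ
      = (R : ℝ) ^ 2 * (∫ ω, (Matrix.trace (M ω)) ^ 2 ∂μ)
        + 2 * R * (∫ ω, Matrix.trace ((M ω) ^ 2) ∂μ)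
        - 2 * R * (∫ ω, ∑ i, (M ω i i) ^ 2 ∂μ) := by
  have hMint (i j k l : Fin d) : Integrable (fun ω => M ω i j * M ω k l) μ := by
    simp only [hM]
    exact integrable_transpose_mul_self_apply_mul
      (fun k l => (by fun_prop : Measurable fun ω => B ω k l).aestronglyMeasurable) hBint i j k l
  have hAM : IndepFun (fun ω (q : Fin d × Fin R) => A ω q.1 q.2) (fun ω i j => M ω i j) μ := by
    simp only [hM]
    exact hAB.comp (φ := fun (a : Fin d → Fin R → ℝ) (q : Fin d × Fin R) => a q.1 q.2)
      (ψ := fun (b : Fin p → Fin d → ℝ) i j => ((of b)ᵀ * of b) i j) (by fun_prop)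
      (by simp only [mul_apply, transpose_apply, of_apply]; fun_prop)
  have hMsymm (ω) : (M ω).IsSymm := by rw [hM, IsSymm, transpose_mul, transpose_transpose]
  simp only [trace_transpose_mul_self_of_mul, ← hM, of_apply]
  simpa only [Fintype.card_fin] using
    integral_sq_sum_quadForm_rademacher (fun q => hAdist q.1 q.2) hAiid hAM hMint hMsymm

/-- For a random `d × R` matrix `A` with i.i.d. Rademacher entries and an independent
random `p × d` matrix `B` with `𝔼‖B‖_F⁴ < ∞`, writing `M = Bᵀ B`:
`𝔼‖B A‖_F⁴ = R² 𝔼[tr(M)²] + 2R 𝔼[tr(M²)] - 2R 𝔼[∑ᵢ Mᵢᵢ²]`. -/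
theorem rademacher_matrix_prod_fourth_moment_eq
    {Ω : Type} [MeasurableSpace Ω] (μ : Measure Ω) [IsProbabilityMeasure μ]
    (d R p : ℕ)
    (A : Ω → Fin d → Fin R → ℝ) (B : Ω → Fin p → Fin d → ℝ)
    (hAmeas : ∀ i j, Measurable (fun ω => A ω i j))
    (hAdist : ∀ i j, Measure.map (fun ω => A ω i j) μ = radDist)
    (hAiid : iIndepFun
      (fun q : Fin d × Fin R => fun ω => A ω q.1 q.2) μ)
    (hBmeas : Measurable B)
    (hAB : IndepFun A B μ)
    (hBint : Integrable (fun ω => (∑ i, ∑ j, (B ω i j) ^ 2) ^ 2) μ)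
    (M : Ω → Matrix (Fin d) (Fin d) ℝ)
    (hM : ∀ ω, M ω = (Matrix.of (B ω))ᵀ * Matrix.of (B ω)) :
    ∫ ω, (Matrix.trace ((Matrix.of (B ω) * Matrix.of (A ω))ᵀ
            * (Matrix.of (B ω) * Matrix.of (A ω)))) ^ 2 ∂μ
      = (R : ℝ) ^ 2 * (∫ ω, (Matrix.trace (M ω)) ^ 2 ∂μ)
        + 2 * R * (∫ ω, Matrix.trace ((M ω) ^ 2) ∂μ)
        - 2 * R * (∫ ω, ∑ i, (M ω i i) ^ 2 ∂μ) :=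
  rademacher_matrix_prod_fourth_moment_eq_general μ d R p A B hAdist hAiid hBmeas hAB hBint M hM
end
end

section
/- (Wishart-type lemma for Rademacher matrices) Let $\mathbf{A} \in \mathbb{R}^{d \times R}$ be a random matrix whose entries are i.i.d. Rademacher random variables, and let $\mathbf{B} \in \mathbb{R}^{p \times d}$ be a random matrix independent of $\mathbf{A}$ with $\mathbb{E}\|\mathbf{B}\|_F^4 < \infty$. Then $\mathbb{E}\,\|\mathbf{B}\mathbf{A}\|_F^4 \le R(R+2)\,\mathbb{E}\,\|\mathbf{B}\|_F^4$. -/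
open MeasureTheory ProbabilityTheory Matrix Finset

noncomputable section

/-!
Conditioning on `B` (Tonelli, through the independence of `A` and `B`) reduces the claim to a
fixed matrix `b`. Then `vec (b A) = (b ⊗ I_R) vec A`, so `‖b A‖_F² = ‖C x‖²` for the Rademacher
vector `x = vec A` and `C = b ⊗ I_R`. An index occurring exactly once in `x_s x_t x_u x_v` makes
its expectation vanish by independence, whence
`𝔼[x_s x_t x_u x_v] = δ_st δ_uv + δ_su δ_tv + δ_sv δ_tu - 2 δ_stuv` and
`𝔼‖C x‖⁴ ≤ ‖C‖_F⁴ + 2 ‖C Cᵀ‖_F² = R² ‖b‖_F⁴ + 2 R ‖b bᵀ‖_F² ≤ R (R + 2) ‖b‖_F⁴`.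
-/

lemma ae_radDist_sq_eq_one : ∀ᵐ x ∂radDist, x ^ 2 = 1 := by
  have hs : MeasurableSet {x : ℝ | ¬ x ^ 2 = 1} :=
    ((measurable_id.pow_const 2) (measurableSet_singleton 1)).compl
  rw [ae_iff, radDist, Measure.add_apply, Measure.smul_apply, Measure.smul_apply,
    Measure.dirac_apply' _ hs, Measure.dirac_apply' _ hs]
  norm_num [Set.indicator_apply]

lemma integral_radDist (f : ℝ → ℝ) :
    ∫ x, f x ∂radDist = 2⁻¹ * f 1 + 2⁻¹ * f (-1) := by
  have h (a : ℝ) : Integrable f ((2⁻¹ : ENNReal) • Measure.dirac a) :=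
    (integrable_dirac (by simp)).smul_measure (by norm_num)
  rw [radDist, integral_add_measure (h 1) (h (-1)), integral_smul_measure,
    integral_smul_measure, integral_dirac, integral_dirac]
  norm_num

lemma sq_sum_mul_mul_sq_sum_mul {ι : Type*} [Fintype ι] (a b x : ι → ℝ) :
    (∑ s, a s * x s) ^ 2 * (∑ s, b s * x s) ^ 2 =
      ∑ s, ∑ t, ∑ s', ∑ t', a s * a s' * b t * b t' * (x s * x s' * x t * x t') := by
  simp only [sq, sum_mul_sum]
  exact sum_congr rfl fun _ _ => sum_congr rfl fun _ _ => sum_congr rfl fun _ _ =>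
    sum_congr rfl fun _ _ => by ring

lemma sq_sum_mulVec_sq {ι J : Type*} [Fintype ι] [Fintype J] (C : Matrix J ι ℝ) (x : ι → ℝ) :
    (∑ α, (C *ᵥ x) α ^ 2) ^ 2 = ∑ α, ∑ β, (∑ s, C α s * x s) ^ 2 * (∑ s, C β s * x s) ^ 2 := by
  rw [sq (∑ α, _), sum_mul_sum]
  rfl

lemma sum_sq_mul_transpose_le {m n : Type*} [Fintype m] [Fintype n] (b : Matrix m n ℝ) :
    ∑ i, ∑ i', (b * bᵀ) i i' ^ 2 ≤ (∑ i, ∑ k, b i k ^ 2) ^ 2 := by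
  calc ∑ i, ∑ i', (b * bᵀ) i i' ^ 2 ≤ ∑ i, ∑ i', (∑ k, b i k ^ 2) * ∑ k, b i' k ^ 2 := by
        gcongr with i _ i' _
        exact sum_mul_sq_le_sq_mul_sq _ _ _
    _ = (∑ i, ∑ k, b i k ^ 2) ^ 2 := by rw [sq, sum_mul_sum]

lemma sum_sq_mul_eq_sum_sq_kronecker_mulVec {m n r : Type*} [Fintype m] [Fintype n]
    [Fintype r] [DecidableEq r] (b : Matrix m n ℝ) (x : n × r → ℝ) :
    ∑ i, ∑ j, ((b * of fun k j => x (k, j)) i j) ^ 2 =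
      ∑ α, (kronecker b (1 : Matrix r r ℝ) *ᵥ x) α ^ 2 := by
  simp [Fintype.sum_prod_type, mulVec, dotProduct, kroneckerMap_apply, one_apply, mul_apply]

lemma sum_sq_kronecker_one {m n r : Type*} [Fintype m] [Fintype n] [Fintype r] [DecidableEq r]
    (b : Matrix m n ℝ) :
    ∑ α, ∑ s, kronecker b (1 : Matrix r r ℝ) α s ^ 2 = Fintype.card r * ∑ i, ∑ k, b i k ^ 2 := by
  simp [Fintype.sum_prod_type, kroneckerMap_apply, one_apply, mul_sum]

lemma kronecker_one_mul_transpose {m n r : Type*} [Fintype n] [Fintype r] [DecidableEq r]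
    (b : Matrix m n ℝ) :
    kronecker b (1 : Matrix r r ℝ) * (kronecker b (1 : Matrix r r ℝ))ᵀ =
      kronecker (b * bᵀ) (1 : Matrix r r ℝ) := by
  simp only [kronecker]
  rw [← kroneckerMap_transpose, transpose_one, ← mul_kronecker_mul, mul_one]

theorem ProbabilityTheory.IndepFun.integral_le_of_forall_integral_le {Ω α β : Type*}
    [MeasurableSpace Ω] [MeasurableSpace α] [MeasurableSpace β] {μ : Measure Ω}
    [IsFiniteMeasure μ] {X : Ω → α} {Y : Ω → β} (hXY : IndepFun X Y μ) (hX : Measurable X)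
    (hY : Measurable Y) {f : α → β → ℝ}
    (hf : Measurable (Function.uncurry f)) (hf0 : ∀ a b, 0 ≤ f a b) {g : β → ℝ}
    (hg : Integrable (fun ω => g (Y ω)) μ) (hfi : ∀ b, Integrable (fun ω => f (X ω) b) μ)
    (hfg : ∀ b, ∫ ω, f (X ω) b ∂μ ≤ g b) :
    ∫ ω, f (X ω) (Y ω) ∂μ ≤ ∫ ω, g (Y ω) ∂μ := by
  have hg0 (b : β) : 0 ≤ g b := (integral_nonneg fun _ => hf0 _ _).trans (hfg b)
  have hlin : ∫⁻ ω, .ofReal (f (X ω) (Y ω)) ∂μ ≤ ∫⁻ ω, .ofReal (g (Y ω)) ∂μ :=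
    calc ∫⁻ ω, .ofReal (f (X ω) (Y ω)) ∂μ
        = ∫⁻ p, .ofReal (Function.uncurry f p) ∂(μ.map fun ω => (X ω, Y ω)) :=
          (lintegral_map (ENNReal.measurable_ofReal.comp hf) (hX.prodMk hY)).symm
      _ = ∫⁻ b, ∫⁻ a, .ofReal (f a b) ∂(μ.map X) ∂(μ.map Y) := by
          rw [(indepFun_iff_map_prod_eq_prod_map_map hX.aemeasurable hY.aemeasurable).mp hXY,
            lintegral_prod_symm' (fun p => .ofReal (Function.uncurry f p))
              (ENNReal.measurable_ofReal.comp hf)]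
          rfl
      _ = ∫⁻ b, .ofReal (∫ ω, f (X ω) b ∂μ) ∂(μ.map Y) := by
          refine lintegral_congr fun b => ?_
          rw [lintegral_map (f := fun a => .ofReal (f a b))
              (ENNReal.measurable_ofReal.comp (hf.comp measurable_prodMk_right)) hX,
            ofReal_integral_eq_lintegral_ofReal (hfi b) (.of_forall fun _ => hf0 _ _)]
      _ ≤ ∫⁻ b, .ofReal (g b) ∂(μ.map Y) := lintegral_mono fun b => ENNReal.ofReal_le_ofReal (hfg b)
      _ ≤ ∫⁻ ω, .ofReal (g (Y ω)) ∂μ := lintegral_map_le _ _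
  have hfin : ∫⁻ ω, .ofReal (g (Y ω)) ∂μ ≠ ⊤ :=
    (lintegral_ofReal_ne_top_iff_integrable hg.1 (.of_forall fun _ => hg0 _)).2 hg
  rw [integral_eq_lintegral_of_nonneg_ae (.of_forall fun _ => hf0 _ _)
      (hf.comp (hX.prodMk hY)).aestronglyMeasurable,
    integral_eq_lintegral_of_nonneg_ae (.of_forall fun _ => hg0 _) hg.1]
  exact ENNReal.toReal_mono hfin hlin

structure IsIIDRademacher {ι Ω : Type*} [MeasurableSpace Ω] (X : ι → Ω → ℝ)
    (μ : Measure Ω) : Prop where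
  measurable : ∀ i, Measurable (X i)
  map_eq : ∀ i, μ.map (X i) = radDist
  iIndepFun : iIndepFun X μ

namespace IsIIDRademacher

variable {ι Ω : Type*} [MeasurableSpace Ω] {μ : Measure Ω} {X : ι → Ω → ℝ}

lemma ae_sq_eq_one (hX : IsIIDRademacher X μ) (i : ι) : ∀ᵐ ω ∂μ, X i ω ^ 2 = 1 :=
  ae_of_ae_map (hX.measurable i).aemeasurable (hX.map_eq i ▸ ae_radDist_sq_eq_one)

lemma integral_eq_zero (hX : IsIIDRademacher X μ) (i : ι) : ∫ ω, X i ω ∂μ = 0 := by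
  have h : ∫ x, x ∂(μ.map (X i)) = ∫ ω, X i ω ∂μ :=
    integral_map (hX.measurable i).aemeasurable aestronglyMeasurable_id
  rw [← h, hX.map_eq, integral_radDist]
  norm_num

lemma integrable_mul_mul_mul [IsFiniteMeasure μ] (hX : IsIIDRademacher X μ) (s t u v : ι) :
    Integrable (fun ω => X s ω * X t ω * X u ω * X v ω) μ := by
  have := hX.measurable
  refine .of_bound (Measurable.aestronglyMeasurable (by fun_prop)) 1 ?_
  filter_upwards [hX.ae_sq_eq_one s, hX.ae_sq_eq_one t, hX.ae_sq_eq_one u,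
    hX.ae_sq_eq_one v] with ω hs ht hu hv
  rw [Real.norm_eq_abs, ← sq_le_one_iff_abs_le_one]
  simp [mul_pow, hs, ht, hu, hv]

lemma integral_mul_mul_mul_of_ne (hX : IsIIDRademacher X μ) {s : ι} (t u v : ι)
    (hst : s ≠ t) (hsu : s ≠ u) (hsv : s ≠ v) :
    ∫ ω, X s ω * X t ω * X u ω * X v ω ∂μ = 0 := by
  classical
  have hφ : Measurable fun x : ({s} : Finset ι) → ℝ => x ⟨s, mem_singleton_self s⟩ :=
    measurable_pi_apply _
  have hψ : Measurable fun y : ({t, u, v} : Finset ι) → ℝ =>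
      y ⟨t, by simp⟩ * y ⟨u, by simp⟩ * y ⟨v, by simp⟩ := by fun_prop
  have hind := (hX.iIndepFun.indepFun_finset {s} {t, u, v} (by simp [*]) hX.measurable).comp
    hφ hψ
  have := hX.measurable
  simp_rw [mul_assoc (X s _)]
  refine (hind.integral_fun_mul_eq_mul_integral ?_ ?_).trans ?_
  · exact Measurable.aestronglyMeasurable (by fun_prop)
  · exact Measurable.aestronglyMeasurable (by fun_prop)
  · simp [hX.integral_eq_zero]

lemma integral_mul_mul_mul [IsProbabilityMeasure μ] [DecidableEq ι] (hX : IsIIDRademacher X μ)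
    (s t u v : ι) :
    ∫ ω, X s ω * X t ω * X u ω * X v ω ∂μ =
      (if s = t ∧ u = v then 1 else 0) + (if s = u ∧ t = v then 1 else 0) +
        (if s = v ∧ t = u then 1 else 0) - 2 * (if s = t ∧ s = u ∧ s = v then 1 else 0) := by
  by_cases hpair : (s = t ∧ u = v) ∨ (s = u ∧ t = v) ∨ (s = v ∧ t = u)
  · have h1 : ∀ᵐ ω ∂μ, X s ω * X t ω * X u ω * X v ω = 1 := by
      filter_upwards [hX.ae_sq_eq_one s, hX.ae_sq_eq_one t, hX.ae_sq_eq_one u,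
        hX.ae_sq_eq_one v] with ω hs ht hu hv
      rcases hpair with ⟨rfl, rfl⟩ | ⟨rfl, rfl⟩ | ⟨rfl, rfl⟩
      · linear_combination X u ω ^ 2 * hs + hu
      · linear_combination X t ω ^ 2 * hs + ht
      · linear_combination X t ω ^ 2 * hs + ht
    rw [integral_congr_ae h1, integral_const, probReal_univ, one_smul]
    grind
  · have hlonely : (s ≠ t ∧ s ≠ u ∧ s ≠ v) ∨ (t ≠ s ∧ t ≠ u ∧ t ≠ v) ∨
        (u ≠ s ∧ u ≠ t ∧ u ≠ v) ∨ (v ≠ s ∧ v ≠ t ∧ v ≠ u) := by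
      grind
    have hrhs : ¬(s = t ∧ s = u ∧ s = v) := by grind
    rw [if_neg (by tauto), if_neg (by tauto), if_neg (by tauto), if_neg hrhs]
    simp only [add_zero, mul_zero, sub_zero]
    rcases hlonely with ⟨h1, h2, h3⟩ | ⟨h1, h2, h3⟩ | ⟨h1, h2, h3⟩ | ⟨h1, h2, h3⟩
    · exact hX.integral_mul_mul_mul_of_ne t u v h1 h2 h3
    · convert hX.integral_mul_mul_mul_of_ne s u v h1 h2 h3 using 3; ring
    · convert hX.integral_mul_mul_mul_of_ne s t v h1 h2 h3 using 3; ring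
    · convert hX.integral_mul_mul_mul_of_ne s t u h1 h2 h3 using 3; ring

lemma integrable_sq_mul_sq [IsFiniteMeasure μ] [Fintype ι] (hX : IsIIDRademacher X μ)
    (a b : ι → ℝ) :
    Integrable (fun ω => (∑ s, a s * X s ω) ^ 2 * (∑ s, b s * X s ω) ^ 2) μ := by
  simp_rw [sq_sum_mul_mul_sq_sum_mul a b (fun s => X s _)]
  exact integrable_finsetSum _ fun s _ => integrable_finsetSum _ fun t _ =>
    integrable_finsetSum _ fun s' _ => integrable_finsetSum _ fun t' _ =>
      (hX.integrable_mul_mul_mul s s' t t').const_mul _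

lemma integral_sq_mul_sq [IsProbabilityMeasure μ] [Fintype ι] [DecidableEq ι]
    (hX : IsIIDRademacher X μ) (a b : ι → ℝ) :
    ∫ ω, (∑ s, a s * X s ω) ^ 2 * (∑ s, b s * X s ω) ^ 2 ∂μ =
      (∑ s, a s ^ 2) * (∑ s, b s ^ 2) + 2 * (∑ s, a s * b s) ^ 2 - 2 * ∑ s, a s ^ 2 * b s ^ 2 := by
  have hint (s t u v : ι) (c : ℝ) : Integrable (fun ω => c * (X s ω * X t ω * X u ω * X v ω)) μ :=
    (hX.integrable_mul_mul_mul s t u v).const_mul c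
  simp_rw [sq_sum_mul_mul_sq_sum_mul a b (fun s => X s _)]
  simp (disch := intros; repeat
      (first | exact hint _ _ _ _ _ | refine integrable_finsetSum _ fun _ _ => ?_))
    only [integral_finsetSum, integral_const_mul, hX.integral_mul_mul_mul]
  simp only [mul_add, mul_sub, sum_add_distrib, sum_sub_distrib, ite_and, mul_ite, mul_zero,
    mul_one, sum_ite_eq, sum_ite_eq', mem_univ, if_true, sum_ite_irrel, sum_const_zero]
  have hnorms : ∑ s, ∑ t, a s * a s * b t * b t = (∑ s, a s ^ 2) * ∑ t, b t ^ 2 := by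
    simp only [sum_mul_sum, sq, mul_assoc]
  have hinner : ∑ s, ∑ t, a s * a t * b s * b t = (∑ s, a s * b s) ^ 2 := by
    rw [sq, sum_mul_sum]
    exact sum_congr rfl fun _ _ => sum_congr rfl fun _ _ => by ring
  have hinner' : ∑ s, ∑ t, a s * a t * b t * b s = (∑ s, a s * b s) ^ 2 := by
    rw [sq, sum_mul_sum]
    exact sum_congr rfl fun _ _ => sum_congr rfl fun _ _ => by ring
  have hdiag : ∑ s, a s * a s * b s * b s * 2 = 2 * ∑ s, a s ^ 2 * b s ^ 2 := by
    rw [mul_sum]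
    exact sum_congr rfl fun _ _ => by ring
  linear_combination hnorms + hinner + hinner' - hdiag

lemma integrable_sq_sum_sq_mulVec [IsFiniteMeasure μ] [Fintype ι] {J : Type*} [Fintype J]
    (hX : IsIIDRademacher X μ) (C : Matrix J ι ℝ) :
    Integrable (fun ω => (∑ α, (C *ᵥ fun s => X s ω) α ^ 2) ^ 2) μ := by
  simp_rw [sq_sum_mulVec_sq]
  exact integrable_finsetSum _ fun α _ => integrable_finsetSum _ fun β _ =>
    hX.integrable_sq_mul_sq (C α) (C β)

lemma integral_sq_sum_sq_mulVec_le [IsProbabilityMeasure μ] [Fintype ι] [DecidableEq ι]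
    {J : Type*} [Fintype J] (hX : IsIIDRademacher X μ) (C : Matrix J ι ℝ) :
    ∫ ω, (∑ α, (C *ᵥ fun s => X s ω) α ^ 2) ^ 2 ∂μ ≤
      (∑ α, ∑ s, C α s ^ 2) ^ 2 + 2 * ∑ α, ∑ β, (C * Cᵀ) α β ^ 2 := by
  simp_rw [sq_sum_mulVec_sq]
  rw [integral_finsetSum _ fun α _ => integrable_finsetSum _ fun β _ =>
    hX.integrable_sq_mul_sq (C α) (C β)]
  simp_rw [integral_finsetSum _ fun β _ => hX.integrable_sq_mul_sq (C _) (C β),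
    hX.integral_sq_mul_sq]
  calc _ ≤ ∑ α, ∑ β, ((∑ s, C α s ^ 2) * (∑ s, C β s ^ 2) + 2 * (∑ s, C α s * C β s) ^ 2) := by
        gcongr
        exact sub_le_self _ (by positivity)
    _ = _ := by
        simp only [sum_add_distrib, ← mul_sum, sq (∑ α, _), sum_mul_sum, mul_apply, transpose_apply]

lemma integrable_sq_sum_sq_mul {m n r : Type*} [Fintype m] [Fintype n] [Fintype r]
    [DecidableEq r] [IsFiniteMeasure μ] {X : n × r → Ω → ℝ} (hX : IsIIDRademacher X μ)
    (b : Matrix m n ℝ) :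
    Integrable (fun ω => (∑ i, ∑ j, ((b * of fun k j => X (k, j) ω) i j) ^ 2) ^ 2) μ := by
  refine (hX.integrable_sq_sum_sq_mulVec (kronecker b (1 : Matrix r r ℝ))).congr
    (.of_forall fun ω => ?_)
  simp only [sum_sq_mul_eq_sum_sq_kronecker_mulVec b (fun s => X s ω)]

lemma integral_sq_sum_sq_mul_le {m n r : Type*} [Fintype m] [Fintype n] [Fintype r]
    [DecidableEq n] [DecidableEq r] [IsProbabilityMeasure μ] {X : n × r → Ω → ℝ}
    (hX : IsIIDRademacher X μ) (b : Matrix m n ℝ) :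
    ∫ ω, (∑ i, ∑ j, ((b * of fun k j => X (k, j) ω) i j) ^ 2) ^ 2 ∂μ ≤
      Fintype.card r * (Fintype.card r + 2) * (∑ i, ∑ k, b i k ^ 2) ^ 2 := by
  have hR : (0 : ℝ) ≤ Fintype.card r := Nat.cast_nonneg _
  calc _ = ∫ ω, (∑ α, (kronecker b (1 : Matrix r r ℝ) *ᵥ fun s => X s ω) α ^ 2) ^ 2 ∂μ := by
        refine integral_congr_ae (.of_forall fun ω => ?_)
        simp only [sum_sq_mul_eq_sum_sq_kronecker_mulVec b (fun s => X s ω)]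
    _ ≤ _ := hX.integral_sq_sum_sq_mulVec_le (kronecker b 1)
    _ ≤ _ := by
        rw [sum_sq_kronecker_one, kronecker_one_mul_transpose, sum_sq_kronecker_one]
        nlinarith [mul_le_mul_of_nonneg_left (sum_sq_mul_transpose_le b) hR]

end IsIIDRademacher

/-- Wishart-type lemma for Rademacher matrices: for a random `d × R` matrix `A` with
i.i.d. Rademacher entries and an independent random `p × d` matrix `B` with
`𝔼‖B‖_F⁴ < ∞`: `𝔼‖B A‖_F⁴ ≤ R(R+2) 𝔼‖B‖_F⁴`. -/
theorem rademacher_matrix_prod_fourth_moment_le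
    {Ω : Type} [MeasurableSpace Ω] (μ : Measure Ω) [IsProbabilityMeasure μ]
    (d R p : ℕ)
    (A : Ω → Fin d → Fin R → ℝ) (B : Ω → Fin p → Fin d → ℝ)
    (hAmeas : ∀ i j, Measurable (fun ω => A ω i j))
    (hAdist : ∀ i j, Measure.map (fun ω => A ω i j) μ = radDist)
    (hAiid : iIndepFun
      (fun q : Fin d × Fin R => fun ω => A ω q.1 q.2) μ)
    (hBmeas : Measurable B)
    (hAB : IndepFun A B μ)
    (hBint : Integrable (fun ω => (∑ i, ∑ j, (B ω i j) ^ 2) ^ 2) μ) :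
    ∫ ω, (∑ i, ∑ j, ((Matrix.of (B ω) * Matrix.of (A ω)) i j) ^ 2) ^ 2 ∂μ
      ≤ (R : ℝ) * (R + 2) * (∫ ω, (∑ i, ∑ j, (B ω i j) ^ 2) ^ 2 ∂μ) := by
  have hA : IsIIDRademacher (fun q : Fin d × Fin R => fun ω => A ω q.1 q.2) μ :=
    ⟨fun q => hAmeas q.1 q.2, fun q => hAdist q.1 q.2, hAiid⟩
  have hAm : Measurable A :=
    measurable_pi_lambda _ fun k => measurable_pi_lambda _ fun j => hAmeas k j
  have hf : Measurable (Function.uncurry fun (a : Fin d → Fin R → ℝ) (b : Fin p → Fin d → ℝ) =>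
      (∑ i, ∑ j, ((of b * of a) i j) ^ 2) ^ 2) := by
    simp only [Function.uncurry_def, mul_apply, of_apply]
    fun_prop
  rw [← integral_const_mul]
  refine hAB.integral_le_of_forall_integral_le
    (g := fun b => R * (R + 2) * (∑ i, ∑ j, b i j ^ 2) ^ 2) hAm hBmeas hf
    (fun _ _ => by positivity) (hBint.const_mul _) (fun b => hA.integrable_sq_sum_sq_mul (of b))
    fun b => ?_
  simpa using hA.integral_sq_sum_sq_mul_le (of b)

end
end

section
/- Let $N \ge 1$, let $d_1,\dots,d_N, R$ be positive integers, and let $\mathcal{X} \in \mathbb{R}^{d_1 \times \cdots \times d_N}$ be a fixed tensor. Let $\mathcal{G}^1 \in \mathbb{R}^{1 \times d_1 \times R}$, $\mathcal{G}^n \in \mathbb{R}^{R \times d_n \times R}$ for $1 < n < N$, and $\mathcal{G}^N \in \mathbb{R}^{R \times d_N \times 1}$ be random core tensors whose entries are all i.i.d. standard Gaussian $\mathcal{N}(0,1)$, and let $\mathcal{T} = [\![\mathcal{G}^1, \dots, \mathcal{G}^N]\!]$ be the corresponding tensor train tensor. Then $\mathbb{E}\,\langle \mathcal{T}, \mathcal{X}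 \rangle^2 = R^{N-1}\,\|\mathcal{X}\|_F^2$. -/
/-!
Expanding the contraction, `⟨𝒯, 𝒳⟩ = ∑_{i, r} 𝒳 i * ∏ₙ 𝒢ⁿ (r (n-1)) (i n) (r n)` is a linear
combination of monomials indexed by a multi-index `i` and a bond path `r`, each taking exactly one
entry from every core. Cores are independent, so the expectation of a product of two such monomials
factors over the cores into `∏ₙ 𝔼[g g']`, which is `1` if both monomials use the same entries and
`0` otherwise. The entries used determine `(i, r)`, so the monomials are orthonormal in `L²` and
`𝔼⟨𝒯, 𝒳⟩² = ∑_{i, r} (𝒳 i)²`, with `R ^ (N - 1)` bond paths.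
-/

open MeasureTheory ProbabilityTheory Matrix Finset

noncomputable section

namespace ProbabilityTheory

variable {Ω : Type*} [MeasurableSpace Ω] {P : Measure Ω}

lemma iIndepFun.curry {ι : Type*} {κ : ι → Type*} {𝓧 : (i : ι) → κ i → Type*}
    [∀ i j, MeasurableSpace (𝓧 i j)] {X : (i : ι) → (j : κ i) → Ω → 𝓧 i j}
    (mX : ∀ i j, Measurable (X i j)) (h : iIndepFun (fun p : (i : ι) × κ i ↦ X p.1 p.2) P) :
    iIndepFun (fun i ω ↦ (X i · ω)) P := by
  have := h.isProbabilityMeasure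
  have : ∀ i j, IsProbabilityMeasure (P.map (X i j)) :=
    fun i j ↦ Measure.isProbabilityMeasure_map (mX i j).aemeasurable
  have hblock : ∀ i, iIndepFun (X i) P := fun i ↦ h.precomp (g := Sigma.mk i) sigma_mk_injective
  have : (MeasurableEquiv.piCurry 𝓧) ∘ (fun ω p ↦ X p.1 p.2 ω) = fun ω i j ↦ X i j ω := by
    ext; simp [Sigma.curry]
  rw [iIndepFun_iff_map_fun_eq_infinitePi_map (by fun_prop), ← this,
    ← Measure.map_map (by fun_prop) (by fun_prop),
    (iIndepFun_iff_map_fun_eq_infinitePi_map (by fun_prop)).1 h,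
    Measure.infinitePi_map_piCurry (fun i j ↦ P.map (X i j))]
  congrm Measure.infinitePi fun i ↦ ?_
  rw [(iIndepFun_iff_map_fun_eq_infinitePi_map (by fun_prop)).1 (hblock i)]

lemma iIndepFun.integrable_fun_prod {ι : Type*} [Fintype ι] {X : ι → Ω → ℝ}
    (hX : iIndepFun X P) (mX : ∀ i, Measurable (X i)) (hint : ∀ i, Integrable (X i) P) :
    Integrable (fun ω ↦ ∏ i, X i ω) P := by
  refine ⟨by fun_prop, ?_⟩
  have hind : iIndepFun (fun i ω ↦ ‖X i ω‖ₑ) P := hX.comp (fun _ x ↦ ‖x‖ₑ) fun _ ↦ by fun_prop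
  have hnorm : ∀ ω, ‖∏ i, X i ω‖ₑ = ∏ i, ‖X i ω‖ₑ := fun ω ↦ by
    simp [enorm_eq_nnnorm, nnnorm_prod]
  simp only [HasFiniteIntegral, hnorm]
  rw [lintegral_prod_eq_prod_lintegral_of_indepFun _ _ hind fun i ↦ by fun_prop]
  exact ENNReal.prod_lt_top fun i _ ↦ (hint i).2

variable {X : Ω → ℝ}

lemma HasLaw.integral_eq_zero_of_gaussianReal (hX : HasLaw X (gaussianReal 0 1) P) :
    ∫ ω, X ω ∂P = 0 := by
  simpa using hX.integral_eq

lemma HasLaw.integral_sq_eq_one_of_gaussianReal (hX : HasLaw X (gaussianReal 0 1) P) :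
    ∫ ω, X ω ^ 2 ∂P = 1 := by
  rw [← variance_of_integral_eq_zero hX.aemeasurable hX.integral_eq_zero_of_gaussianReal,
    hX.variance_eq]
  simp

lemma HasLaw.memLp_two_of_gaussianReal (hX : HasLaw X (gaussianReal 0 1) P) : MemLp X 2 P := by
  have := memLp_id_gaussianReal (μ := 0) (v := 1) 2
  rw [← hX.map_eq, memLp_map_measure_iff (by fun_prop) hX.aemeasurable] at this
  exact_mod_cast this

lemma iIndepFun.integral_mul_eq_ite_of_gaussianReal {ι : Type*} [DecidableEq ι]
    {Y : ι → Ω → ℝ} (hind : iIndepFun Y P) (hY : ∀ i, HasLaw (Y i) (gaussianReal 0 1) P)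
    (i j : ι) : ∫ ω, Y i ω * Y j ω ∂P = if i = j then 1 else 0 := by
  by_cases hij : i = j
  · subst hij
    simpa [← sq] using (hY i).integral_sq_eq_one_of_gaussianReal
  · rw [if_neg hij, (hind.indepFun hij).integral_fun_mul_eq_mul_integral
      (hY i).aemeasurable.aestronglyMeasurable (hY j).aemeasurable.aestronglyMeasurable,
      (hY i).integral_eq_zero_of_gaussianReal, zero_mul]

section Sigma

variable {ι : Type*} {κ : ι → Type*} {Y : (i : ι) × κ i → Ω → ℝ}

lemma iIndepFun.mul_sigma (hind : iIndepFun Y P) (mY : ∀ p, Measurable (Y p))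
    (f g : (i : ι) → κ i) :
    iIndepFun (fun i ω ↦ Y ⟨i, f i⟩ ω * Y ⟨i, g i⟩ ω) P :=
  (hind.curry (X := fun i j ↦ Y ⟨i, j⟩) fun _ _ ↦ mY _).comp
    (fun i x ↦ x (f i) * x (g i)) fun _ ↦ by fun_prop

variable [Fintype ι]

lemma integrable_prod_mul_prod_of_gaussianReal (hind : iIndepFun Y P)
    (mY : ∀ p, Measurable (Y p)) (hY : ∀ p, HasLaw (Y p) (gaussianReal 0 1) P)
    (f g : (i : ι) → κ i) :
    Integrable (fun ω ↦ (∏ i, Y ⟨i, f i⟩ ω) * ∏ i, Y ⟨i, g i⟩ ω) P := by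
  simp_rw [← prod_mul_distrib]
  exact (hind.mul_sigma mY f g).integrable_fun_prod (fun _ ↦ by fun_prop) fun i ↦
    (hY _).memLp_two_of_gaussianReal.integrable_mul (hY _).memLp_two_of_gaussianReal

lemma integral_prod_mul_prod_of_gaussianReal [∀ i, DecidableEq (κ i)] (hind : iIndepFun Y P)
    (mY : ∀ p, Measurable (Y p)) (hY : ∀ p, HasLaw (Y p) (gaussianReal 0 1) P)
    (f g : (i : ι) → κ i) :
    ∫ ω, (∏ i, Y ⟨i, f i⟩ ω) * ∏ i, Y ⟨i, g i⟩ ω ∂P = if f = g then 1 else 0 := by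
  classical
  simp_rw [← prod_mul_distrib]
  rw [(hind.mul_sigma mY f g).integral_fun_prod_eq_prod_integral fun _ ↦ by fun_prop]
  simp_rw [hind.integral_mul_eq_ite_of_gaussianReal hY, sigma_mk_injective.eq_iff, prod_boole]
  simp [funext_iff]

end Sigma

lemma integral_sq_sum_of_orthonormal {Z : Type*} [Fintype Z] [DecidableEq Z] {F : Z → Ω → ℝ}
    (hint : ∀ z z', Integrable (fun ω ↦ F z ω * F z' ω) P)
    (horth : ∀ z z', ∫ ω, F z ω * F z' ω ∂P = if z = z' then 1 else 0) (c : Z → ℝ) :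
    ∫ ω, (∑ z, c z * F z ω) ^ 2 ∂P = ∑ z, c z ^ 2 := by
  calc ∫ ω, (∑ z, c z * F z ω) ^ 2 ∂P
      = ∫ ω, ∑ z, ∑ z', c z * c z' * (F z ω * F z' ω) ∂P := by
        congr 1 with ω
        rw [sq, sum_mul_sum]
        exact sum_congr rfl fun _ _ ↦ sum_congr rfl fun _ _ ↦ by ring
    _ = ∑ z, ∑ z', c z * c z' * ∫ ω, F z ω * F z' ω ∂P := by
        rw [integral_finsetSum _ fun z _ ↦ integrable_finsetSum _ fun z' _ ↦ (hint z z').const_mul _]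
        simp_rw [integral_finsetSum _ fun z' _ ↦ (hint _ z').const_mul _, integral_const_mul]
    _ = ∑ z, c z ^ 2 := by simp [horth, sq]

end ProbabilityTheory

section TensorTrain

variable {N : ℕ} (d : Fin N → ℕ) (ρ : Fin (N + 1) → ℕ)

lemma sum_sum_ttPath (g : (n : Fin N) → Fin (ρ n.castSucc) → Fin (d n) → Fin (ρ n.succ) → ℝ)
    (i : (n : Fin N) → Fin (d n)) :
    ∑ a, ∑ b, ttPath d ρ g i a b = ∑ r : (t : Fin (N + 1)) → Fin (ρ t),
      ∏ n, g n (r n.castSucc) (i n) (r n.succ) := by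
  simp only [ttPath]
  rw [(sum_congr rfl fun _ _ ↦ sum_comm).trans sum_comm]
  simp [ite_and]

def ttCoreIndex (z : ((n : Fin N) → Fin (d n)) × ((t : Fin (N + 1)) → Fin (ρ t))) (n : Fin N) :
    Fin (ρ n.castSucc) × Fin (d n) × Fin (ρ n.succ) :=
  (z.2 n.castSucc, z.1 n, z.2 n.succ)

lemma ttCoreIndex_injective (hρlast : ρ (Fin.last N) = 1) :
    Function.Injective (ttCoreIndex d ρ) := by
  rintro ⟨i, r⟩ ⟨i', r'⟩ h
  have hn : ∀ n, r n.castSucc = r' n.castSucc ∧ i n = i' n ∧ r n.succ = r' n.succ := fun n ↦ by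
    simpa [ttCoreIndex] using congrFun h n
  refine Prod.ext (funext fun n ↦ (hn n).2.1) (funext fun t ↦ ?_)
  rcases Fin.eq_castSucc_or_eq_last t with ⟨n, rfl⟩ | rfl
  · exact (hn n).1
  · have : Subsingleton (Fin (ρ (Fin.last N))) := by rw [hρlast]; infer_instance
    exact Subsingleton.elim _ _

lemma card_ttBondIndices {R : ℕ} (hρ0 : ρ 0 = 1) (hρlast : ρ (Fin.last N) = 1)
    (hρmid : ∀ t : Fin (N + 1), t ≠ 0 → t ≠ Fin.last N → ρ t = R) :
    Fintype.card ((t : Fin (N + 1)) → Fin (ρ t)) = R ^ (N - 1) := by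
  rw [Fintype.card_pi]
  simp only [Fintype.card_fin]
  cases N with
  | zero => simp [hρ0]
  | succ k =>
    rw [Fin.prod_univ_succ, Fin.prod_univ_castSucc, hρ0, Fin.succ_last, hρlast]
    simp [hρmid _ (Fin.succ_ne_zero _) (Fin.succ_castSucc _ ▸ (Fin.castSucc_lt_last _).ne)]

end TensorTrain

theorem tt_moment_gaussian_sq_general
    {Ω : Type} [MeasurableSpace Ω] (μ : Measure Ω) [IsProbabilityMeasure μ]
    (N : ℕ) (d : Fin N → ℕ) (R : ℕ)
    (ρ : Fin (N + 1) → ℕ) (hρ0 : ρ 0 = 1) (hρlast : ρ (Fin.last N) = 1)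
    (hρmid : ∀ n : Fin (N + 1), n ≠ 0 → n ≠ Fin.last N → ρ n = R)
    (X : ((n : Fin N) → Fin (d n)) → ℝ)
    (G : Ω → (n : Fin N) → Fin (ρ n.castSucc) → Fin (d n) → Fin (ρ n.succ) → ℝ)
    (hGmeas : ∀ n a i b, Measurable (fun ω => G ω n a i b))
    (hGdist : ∀ n a i b, Measure.map (fun ω => G ω n a i b) μ = gaussianReal 0 1)
    (hGindep : iIndepFun
      (fun p : (Σ n : Fin N, Fin (ρ n.castSucc) × Fin (d n) × Fin (ρ n.succ)) =>
        fun ω => G ω p.1 p.2.1 p.2.2.1 p.2.2.2) μ) :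
    ∫ ω, (∑ i, X i * ∑ a, ∑ b, ttPath d ρ (G ω) i a b) ^ 2 ∂μ
      = (R : ℝ) ^ (N - 1) * ∑ i, (X i) ^ 2 := by
  set Y := fun (p : Σ n : Fin N, Fin (ρ n.castSucc) × Fin (d n) × Fin (ρ n.succ)) ω ↦
    G ω p.1 p.2.1 p.2.2.1 p.2.2.2
  have mY : ∀ p, Measurable (Y p) := fun p ↦ hGmeas _ _ _ _
  have hY : ∀ p, HasLaw (Y p) (gaussianReal 0 1) μ :=
    fun p ↦ ⟨(mY p).aemeasurable, hGdist _ _ _ _⟩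
  have hexpand : ∀ ω, ∑ i, X i * ∑ a, ∑ b, ttPath d ρ (G ω) i a b
      = ∑ z, X z.1 * ∏ n, Y ⟨n, ttCoreIndex d ρ z n⟩ ω := fun ω ↦ by
    simp_rw [sum_sum_ttPath, mul_sum, Fintype.sum_prod_type]
    rfl
  simp_rw [hexpand]
  rw [integral_sq_sum_of_orthonormal
    (fun z z' ↦ integrable_prod_mul_prod_of_gaussianReal hGindep mY hY _ _)
    (fun z z' ↦ by
      simp only [integral_prod_mul_prod_of_gaussianReal hGindep mY hY,
        (ttCoreIndex_injective d ρ hρlast).eq_iff]),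
    Fintype.sum_prod_type]
  simp [card_ttBondIndices ρ hρ0 hρlast hρmid, mul_sum]

/-- Expected isometry (second moment) for a TT tensor with i.i.d. standard Gaussian core
entries: `𝔼⟨𝒯, 𝒳⟩² = R^(N-1) ‖𝒳‖_F²`. -/
theorem tt_moment_gaussian_sq
    {Ω : Type} [MeasurableSpace Ω] (μ : Measure Ω) [IsProbabilityMeasure μ]
    (N : ℕ) (hN : 1 ≤ N) (d : Fin N → ℕ) (hd : ∀ n, 0 < d n) (R : ℕ) (hR : 0 < R)
    (ρ : Fin (N + 1) → ℕ) (hρ0 : ρ 0 = 1) (hρlast : ρ (Fin.last N) = 1)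
    (hρmid : ∀ n : Fin (N + 1), n ≠ 0 → n ≠ Fin.last N → ρ n = R)
    (X : ((n : Fin N) → Fin (d n)) → ℝ)
    (G : Ω → (n : Fin N) → Fin (ρ n.castSucc) → Fin (d n) → Fin (ρ n.succ) → ℝ)
    (hGmeas : ∀ n a i b, Measurable (fun ω => G ω n a i b))
    (hGdist : ∀ n a i b, Measure.map (fun ω => G ω n a i b) μ = gaussianReal 0 1)
    (hGindep : iIndepFun
      (fun p : (Σ n : Fin N, Fin (ρ n.castSucc) × Fin (d n) × Fin (ρ n.succ)) =>
        fun ω => G ω p.1 p.2.1 p.2.2.1 p.2.2.2) μ) :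
    ∫ ω, (∑ i, X i * ∑ a, ∑ b, ttPath d ρ (G ω) i a b) ^ 2 ∂μ
      = (R : ℝ) ^ (N - 1) * ∑ i, (X i) ^ 2 :=
  tt_moment_gaussian_sq_general μ N d R ρ hρ0 hρlast hρmid X G hGmeas hGdist hGindep

end
end
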